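/- For every ℓ ∈ ℕ there exists C = C(ℓ) > 0 such that |D ∂_t^ℓ h_t(n)| + |D* ∂_t^ℓ h_t(n)| ≤ C t^{-(ℓ+1)} (1 + |n|/√t)^{-ℓ} for all n ∈ ℤ and all t > 0, where D and D* act in the variable n. -/

import Mathlib

/-- The `ℓ`-th time-derivative of the discrete heat kernel
`h_t(n) = (1/π) ∫_0^π e^{-2t(1-cos θ)} cos(nθ) dθ`:
`∂_t^ℓ h_t(n) = (1/π) ∫_0^π (-2(1-cos θ))^ℓ e^{-2t(1-cos θ)} cos(nθ) dθ`. -/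
noncomputable def heatKernelDeriv (ℓ : ℕ) (t : ℝ) (n : ℤ) : ℝ :=
  (1 / Real.pi) * ∫ θ in (0:ℝ)..Real.pi,
    (-2 * (1 - Real.cos θ)) ^ ℓ * Real.exp (-2 * t * (1 - Real.cos θ)) * Real.cos ((n : ℝ) * θ)

open Real MeasureTheory

/-- iterated forward difference in the integer variable -/
def Dm : ℕ → (ℤ → ℝ) → ℤ → ℝ
  | 0, g, n => g n
  | (m+1), g, n => Dm m g (n+1) - Dm m g n

lemma Dm_identity (u v : ℤ → ℝ) (c t : ℝ)
    (hK : ∀ q : ℤ, (q : ℝ) * v q = c * (u (q-1) - u (q+1)) + t * (v (q-1) - v (q+1))) :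
    ∀ (m : ℕ) (p : ℤ), (p : ℝ) * Dm m v p =
      -c * (Dm (m+1) u (p-1) + Dm (m+1) u p)
      - t * (Dm (m+1) v (p-1) + Dm (m+1) v p)
      - m * Dm (m-1) v (p+1) := by
  intro m
  induction m with
  | zero =>
    intro p
    have h := hK p
    simp only [Dm, Nat.cast_zero, zero_mul, sub_zero]
    have e1 : p - 1 + 1 = p := by ring
    rw [e1]
    linarith
  | succ m ih =>
    intro p
    have h1 := ih (p + 1)
    have h2 := ih p
    have e1 : p + 1 - 1 = p := by ring
    have e2 : p - 1 + 1 = p := by ring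
    have e3 : p + 1 + 1 = p + 2 := by ring
    simp only [Dm] at h1 h2 ⊢
    rw [e3] at h1 ⊢
    rw [Nat.add_sub_cancel]
    have hm : (m:ℝ) * (Dm (m-1) v (p+2) - Dm (m-1) v (p+1)) = (m:ℝ) * Dm m v (p+1) := by
      cases m with
      | zero => simp
      | succ k =>
        simp only [Nat.add_sub_cancel, Dm]
        rw [e3]
    push_cast at h1 h2 ⊢
    simp only [e1, e2, e3] at h1 h2 ⊢
    linarith [h1, h2, hm]

lemma heat_even (ℓ : ℕ) (t : ℝ) (n : ℤ) : heatKernelDeriv ℓ t (-n) = heatKernelDeriv ℓ t n := by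
  unfold heatKernelDeriv
  congr 1
  apply intervalIntegral.integral_congr
  intro θ _
  push_cast
  rw [show -(n:ℝ)*θ = -((n:ℝ)*θ) by ring, Real.cos_neg]

lemma contA (l : ℕ) (t : ℝ) (k : ℝ) :
    Continuous fun θ : ℝ => (-2 * (1 - Real.cos θ)) ^ l * Real.exp (-2 * t * (1 - Real.cos θ)) *
      Real.cos (k * θ) := by
  fun_prop

lemma keyK (ℓ : ℕ) (t : ℝ) (n : ℤ) :
    (n : ℝ) * heatKernelDeriv ℓ t n =
      (ℓ : ℝ) * (heatKernelDeriv (ℓ-1) t (n-1) - heatKernelDeriv (ℓ-1) t (n+1))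
      + t * (heatKernelDeriv ℓ t (n-1) - heatKernelDeriv ℓ t (n+1)) := by
  rcases eq_or_ne n 0 with rfl | hn
  · have h1 : (0:ℤ) - 1 = -(0+1) := by ring
    rw [h1, heat_even, heat_even]
    simp
  -- now n ≠ 0
  set W : ℝ → ℝ := fun θ => (-2 * (1 - Real.cos θ)) ^ ℓ * Real.exp (-2 * t * (1 - Real.cos θ))
    with hW
  set W' : ℝ → ℝ := fun θ =>
    ((ℓ : ℝ) * (-2 * (1 - Real.cos θ)) ^ (ℓ-1) * (-2 * Real.sin θ)) *
        Real.exp (-2 * t * (1 - Real.cos θ))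
      + (-2 * (1 - Real.cos θ)) ^ ℓ *
        (Real.exp (-2 * t * (1 - Real.cos θ)) * (-2 * t * Real.sin θ)) with hW'
  have hWd : ∀ θ : ℝ, HasDerivAt W (W' θ) θ := by
    intro θ
    have hP : HasDerivAt (fun θ : ℝ => -2 * (1 - Real.cos θ)) (-2 * Real.sin θ) θ := by
      have := ((Real.hasDerivAt_cos θ).const_sub 1).const_mul (-2 : ℝ)
      exact this.congr_deriv (by ring)
    have hPow : HasDerivAt (fun θ : ℝ => (-2 * (1 - Real.cos θ)) ^ ℓ)
        ((ℓ : ℝ) * (-2 * (1 - Real.cos θ)) ^ (ℓ-1) * (-2 * Real.sin θ)) θ := hP.pow ℓ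
    have hE : HasDerivAt (fun θ : ℝ => Real.exp (-2 * t * (1 - Real.cos θ)))
        (Real.exp (-2 * t * (1 - Real.cos θ)) * (-2 * t * Real.sin θ)) θ := by
      have hg : HasDerivAt (fun θ : ℝ => -2 * t * (1 - Real.cos θ)) (-2 * t * Real.sin θ) θ := by
        have := ((Real.hasDerivAt_cos θ).const_sub 1).const_mul (-2 * t)
        exact this.congr_deriv (by ring)
      exact hg.exp
    exact hPow.mul hE
  have hVd : ∀ θ : ℝ, HasDerivAt (fun θ : ℝ => ((n:ℝ))⁻¹ * Real.sin ((n:ℝ) * θ))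
      (Real.cos ((n:ℝ) * θ)) θ := by
    intro θ
    have h1 : HasDerivAt (fun θ : ℝ => (n:ℝ) * θ) ((n:ℝ)) θ := by
      simpa using (hasDerivAt_id θ).const_mul (n:ℝ)
    have h2 := (Real.hasDerivAt_sin ((n:ℝ) * θ)).comp θ h1
    have h3 := h2.const_mul ((n:ℝ))⁻¹
    have : ((n:ℝ)) ≠ 0 := by exact_mod_cast hn
    exact h3.congr_deriv (by field_simp)
  have hibp := intervalIntegral.integral_mul_deriv_eq_deriv_mul
    (a := (0:ℝ)) (b := Real.pi) (u := W) (u' := W') (v := fun θ : ℝ => ((n:ℝ))⁻¹ * Real.sin ((n:ℝ) * θ))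
    (v' := fun θ : ℝ => Real.cos ((n:ℝ) * θ))
    (fun x _ => hWd x) (fun x _ => hVd x)
    (by apply Continuous.intervalIntegrable; fun_prop)
    (by apply Continuous.intervalIntegrable; fun_prop)
  have hn' : ((n:ℝ)) ≠ 0 := by exact_mod_cast hn
  have hsin : Real.sin ((n:ℝ) * π) = 0 := Real.sin_int_mul_pi n
  have key1 : (∫ θ in (0:ℝ)..π, W θ * Real.cos ((n:ℝ)*θ))
      = -∫ θ in (0:ℝ)..π, W' θ * (((n:ℝ))⁻¹ * Real.sin ((n:ℝ)*θ)) := by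
    rw [hibp]
    simp [hsin]
  have h2 : (n:ℝ) * (∫ θ in (0:ℝ)..π, W θ * Real.cos ((n:ℝ)*θ))
      = ∫ θ in (0:ℝ)..π, -(W' θ * Real.sin ((n:ℝ)*θ)) := by
    rw [key1, mul_neg, ← intervalIntegral.integral_const_mul, ← intervalIntegral.integral_neg]
    apply intervalIntegral.integral_congr
    intro θ _
    field_simp
  have hpt : (fun θ : ℝ => -(W' θ * Real.sin ((n:ℝ)*θ))) = fun θ : ℝ =>
      (ℓ:ℝ) * ((-2*(1-Real.cos θ))^(ℓ-1) * Real.exp (-2*t*(1-Real.cos θ)) * Real.cos (((n-1:ℤ):ℝ)*θ)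
             - (-2*(1-Real.cos θ))^(ℓ-1) * Real.exp (-2*t*(1-Real.cos θ)) * Real.cos (((n+1:ℤ):ℝ)*θ))
      + t * ((-2*(1-Real.cos θ))^ℓ * Real.exp (-2*t*(1-Real.cos θ)) * Real.cos (((n-1:ℤ):ℝ)*θ)
           - (-2*(1-Real.cos θ))^ℓ * Real.exp (-2*t*(1-Real.cos θ)) * Real.cos (((n+1:ℤ):ℝ)*θ)) := by
    funext θ
    have htrig : Real.cos (((n:ℝ)-1)*θ) - Real.cos (((n:ℝ)+1)*θ)
        = 2 * Real.sin ((n:ℝ)*θ) * Real.sin θ := by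
      have e1 : ((((n:ℝ)-1)*θ)+(((n:ℝ)+1)*θ))/2 = (n:ℝ)*θ := by ring
      have e2 : ((((n:ℝ)-1)*θ)-(((n:ℝ)+1)*θ))/2 = -θ := by ring
      rw [Real.cos_sub_cos, e1, e2, Real.sin_neg]
      ring
    push_cast
    simp only [hW']
    linear_combination -(((ℓ:ℝ) * (-2*(1-Real.cos θ))^(ℓ-1)
      + t * (-2*(1-Real.cos θ))^ℓ) * Real.exp (-2*t*(1-Real.cos θ))) * htrig
  have hfi : ∀ (l : ℕ) (k : ℤ), (∫ θ in (0:ℝ)..π,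
      (-2*(1-Real.cos θ))^l * Real.exp (-2*t*(1-Real.cos θ)) * Real.cos ((k:ℝ)*θ))
      = π * heatKernelDeriv l t k := by
    intro l k
    rw [heatKernelDeriv]
    rw [← mul_assoc]
    rw [mul_one_div, div_self Real.pi_ne_zero, one_mul]
  have hInt : ∀ (l : ℕ) (k : ℤ), IntervalIntegrable (fun θ : ℝ =>
      (-2*(1-Real.cos θ))^l * Real.exp (-2*t*(1-Real.cos θ)) * Real.cos ((k:ℝ)*θ))
      volume (0:ℝ) π := by
    intro l k
    exact (contA l t (k:ℝ)).intervalIntegrable _ _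
  have h3 : (∫ θ in (0:ℝ)..π, -(W' θ * Real.sin ((n:ℝ)*θ)))
      = (ℓ:ℝ) * (π * heatKernelDeriv (ℓ-1) t (n-1) - π * heatKernelDeriv (ℓ-1) t (n+1))
        + t * (π * heatKernelDeriv ℓ t (n-1) - π * heatKernelDeriv ℓ t (n+1)) := by
    rw [hpt]
    rw [intervalIntegral.integral_add
      (((hInt (ℓ-1) (n-1)).sub (hInt (ℓ-1) (n+1))).const_mul _)
      (((hInt ℓ (n-1)).sub (hInt ℓ (n+1))).const_mul _)]
    rw [intervalIntegral.integral_const_mul, intervalIntegral.integral_const_mul]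
    rw [intervalIntegral.integral_sub (hInt (ℓ-1) (n-1)) (hInt (ℓ-1) (n+1))]
    rw [intervalIntegral.integral_sub (hInt ℓ (n-1)) (hInt ℓ (n+1))]
    rw [hfi, hfi, hfi, hfi]
  have hdef : heatKernelDeriv ℓ t n = (1/π) * ∫ θ in (0:ℝ)..π, W θ * Real.cos ((n:ℝ)*θ) := rfl
  rw [hdef, show (n:ℝ) * ((1/π) * ∫ θ in (0:ℝ)..π, W θ * Real.cos ((n:ℝ)*θ))
      = (1/π) * ((n:ℝ) * ∫ θ in (0:ℝ)..π, W θ * Real.cos ((n:ℝ)*θ)) by ring,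
    h2, h3]
  field_simp

lemma contDmcos (m : ℕ) (n : ℤ) :
    Continuous fun θ : ℝ => Dm m (fun k : ℤ => Real.cos ((k:ℝ) * θ)) n := by
  induction m generalizing n with
  | zero =>
    simp only [Dm]
    fun_prop
  | succ m ih =>
    simp only [Dm]
    exact (ih (n+1)).sub (ih n)

lemma Dm_heat_eq (ℓ m : ℕ) (t : ℝ) (n : ℤ) :
    Dm m (heatKernelDeriv ℓ t) n = (1/π) * ∫ θ in (0:ℝ)..π,
      (-2*(1-Real.cos θ))^ℓ * Real.exp (-2*t*(1-Real.cos θ)) *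
        Dm m (fun k : ℤ => Real.cos ((k:ℝ) * θ)) n := by
  have hInt : ∀ (m : ℕ) (q : ℤ), IntervalIntegrable (fun θ : ℝ =>
      (-2*(1-Real.cos θ))^ℓ * Real.exp (-2*t*(1-Real.cos θ)) *
        Dm m (fun k : ℤ => Real.cos ((k:ℝ) * θ)) q) volume (0:ℝ) π := by
    intro m q
    apply Continuous.intervalIntegrable
    exact ((by fun_prop : Continuous fun θ : ℝ =>
      (-2*(1-Real.cos θ))^ℓ * Real.exp (-2*t*(1-Real.cos θ)))).mul (contDmcos m q)
  induction m generalizing n with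
  | zero => rfl
  | succ m ih =>
    show Dm m (heatKernelDeriv ℓ t) (n+1) - Dm m (heatKernelDeriv ℓ t) n = _
    rw [ih (n+1), ih n, ← mul_sub, ← intervalIntegral.integral_sub (hInt m (n+1)) (hInt m n)]
    congr 1
    apply intervalIntegral.integral_congr
    intro θ _
    simp only [Dm]
    ring

lemma Dm_cos_eq (m : ℕ) (θ : ℝ) : ∀ n : ℤ, Dm m (fun k : ℤ => Real.cos ((k:ℝ) * θ)) n
    = ((Complex.exp (θ * Complex.I) - 1)^m
        * Complex.exp (((n:ℝ) * θ : ℝ) * Complex.I)).re := by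
  induction m with
  | zero =>
    intro n
    simp only [Dm, pow_zero, one_mul]
    rw [Complex.exp_ofReal_mul_I_re]
  | succ m ih =>
    intro n
    have hexp : Complex.exp ((((n+1:ℤ):ℝ) * θ : ℝ) * Complex.I)
        = Complex.exp (((n:ℝ) * θ : ℝ) * Complex.I) * Complex.exp (θ * Complex.I) := by
      rw [← Complex.exp_add]
      congr 1
      push_cast
      ring
    show Dm m _ (n+1) - Dm m _ n = _
    rw [ih (n+1), ih n, ← Complex.sub_re]
    congr 1
    rw [hexp]
    ring

lemma Dm_cos_bound (m : ℕ) (n : ℤ) (θ : ℝ) (hθ : 0 ≤ θ) :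
    |Dm m (fun k : ℤ => Real.cos ((k:ℝ) * θ)) n| ≤ θ^m := by
  rw [Dm_cos_eq]
  set z : ℂ := Complex.exp (θ * Complex.I) - 1 with hz
  have habs : ‖z‖ ≤ θ := by
    have h1 : (‖z‖)^2 = (Real.cos θ - 1)^2 + (Real.sin θ)^2 := by
      rw [Complex.sq_norm, Complex.normSq_apply]
      rw [hz]
      simp [Complex.exp_ofReal_mul_I_re, Complex.exp_ofReal_mul_I_im]
      ring
    have h2 : (Real.cos θ - 1)^2 + (Real.sin θ)^2 = 2 - 2 * Real.cos θ := by
      nlinarith [Real.sin_sq_add_cos_sq θ]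
    have h3 : 1 - θ^2/2 ≤ Real.cos θ := Real.one_sub_sq_div_two_le_cos
    nlinarith [norm_nonneg z]
  calc |((z^m) * Complex.exp (((n:ℝ) * θ : ℝ) * Complex.I)).re|
      ≤ ‖(z^m) * Complex.exp (((n:ℝ) * θ : ℝ) * Complex.I)‖ :=
        Complex.abs_re_le_norm _
    _ = (‖z‖)^m := by
        rw [norm_mul, norm_pow, Complex.norm_exp_ofReal_mul_I, mul_one]
    _ ≤ θ^m := pow_le_pow_left₀ (norm_nonneg z) habs m

lemma moment_bound (m : ℕ) : ∃ C, 0 < C ∧ ∀ c : ℝ, 0 < c →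
    (∫ θ in (0:ℝ)..π, θ^m * Real.exp (-((c*θ)^2))) ≤ C * (c⁻¹)^(m+1) := by
  set g : ℝ → ℝ := fun u => u^m * Real.exp (-(u^2)) with hg
  have hgint : IntegrableOn g (Set.Ioi 0) := by
    have h0 := integrable_rpow_mul_exp_neg_mul_sq (b := 1) one_pos
      (s := (m:ℝ)) (by exact lt_of_lt_of_le (by norm_num) (Nat.cast_nonneg m))
    apply (h0.integrableOn (s := Set.Ioi 0)).congr_fun ?_ measurableSet_Ioi
    intro x hx
    rw [hg]
    simp only []
    rw [Real.rpow_natCast]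
    norm_num
  set CI : ℝ := ∫ u in Set.Ioi (0:ℝ), g u with hCI
  have hCI0 : 0 ≤ CI := by
    apply setIntegral_nonneg measurableSet_Ioi
    intro x hx
    have : (0:ℝ) < x := hx
    positivity
  refine ⟨CI + 1, by positivity, ?_⟩
  intro c hc
  have hmain : (∫ θ in (0:ℝ)..π, θ^m * Real.exp (-((c*θ)^2)))
      = (c⁻¹)^(m+1) * ∫ u in (0:ℝ)..(c*π), g u := by
    have h1 : (∫ θ in (0:ℝ)..π, θ^m * Real.exp (-((c*θ)^2)))
        = ∫ θ in (0:ℝ)..π, (c⁻¹)^m * g (c*θ) := by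
      apply intervalIntegral.integral_congr
      intro θ _
      rw [hg]
      simp only []
      field_simp
      rw [← mul_pow, ← mul_assoc, one_div_mul_cancel hc.ne', one_mul]
    rw [h1, intervalIntegral.integral_const_mul, intervalIntegral.integral_comp_mul_left g hc.ne']
    simp only [mul_zero, smul_eq_mul]
    rw [pow_succ]
    ring
  rw [hmain]
  have h2 : (∫ u in (0:ℝ)..(c*π), g u) ≤ CI := by
    rw [intervalIntegral.integral_of_le (by positivity : (0:ℝ) ≤ c*π)]
    apply setIntegral_mono_set hgint
    · filter_upwards [ae_restrict_mem measurableSet_Ioi] with x hx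
      have hx0 : (0:ℝ) < x := hx
      show (0:ℝ) ≤ g x
      rw [hg]
      positivity
    · filter_upwards with x hx
      exact hx.1
  have h3 : (0:ℝ) < (c⁻¹)^(m+1) := by positivity
  calc (c⁻¹)^(m+1) * ∫ u in (0:ℝ)..(c*π), g u ≤ (c⁻¹)^(m+1) * CI := by
        exact mul_le_mul_of_nonneg_left h2 h3.le
    _ ≤ (CI + 1) * (c⁻¹)^(m+1) := by nlinarith

lemma minc {X A B Y : ℝ} (h1 : X ≤ A) (h2 : X ≤ B * Y) (hA : 0 ≤ A) (hB : 0 ≤ B) (hY : 0 < Y) :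
    X ≤ (max A B) * min 1 Y := by
  rcases le_total 1 Y with h | h
  · rw [min_eq_left h]
    calc X ≤ A := h1
    _ = A * 1 := by ring
    _ ≤ max A B * 1 := by nlinarith [le_max_left A B]
  · rw [min_eq_right h]
    calc X ≤ B * Y := h2
    _ ≤ max A B * Y := by nlinarith [le_max_right A B]

lemma base_bound (ℓ m : ℕ) : ∃ C, 0 < C ∧ ∀ t : ℝ, 0 < t → ∀ n : ℤ,
    |Dm m (heatKernelDeriv ℓ t) n| ≤ C * min 1 (t ^ (-(ℓ:ℝ) - ((m:ℝ)+1)/2)) := by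
  obtain ⟨CI, hCI, hmom⟩ := moment_bound m
  have hpi := Real.pi_pos
  set A : ℝ := (1/π) * (4^ℓ * π^m * π) + 1 with hA
  set B : ℝ := (1/π) * (2^ℓ * (Nat.factorial ℓ) * (CI * π^(m+1))) + 1 with hB
  have hA0 : 0 < A := by positivity
  have hB0 : 0 < B := by positivity
  refine ⟨max A B, lt_max_of_lt_left hA0, ?_⟩
  intro t ht n
  set c : ℝ := Real.sqrt (2*t) / π with hc
  have hc0 : 0 < c := by
    rw [hc]
    have : (0:ℝ) < Real.sqrt (2*t) := Real.sqrt_pos.mpr (by linarith)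
    positivity
  set G : ℝ → ℝ := fun θ => (2*(1-Real.cos θ))^ℓ * Real.exp (-2*t*(1-Real.cos θ)) * θ^m
    with hG
  have hGcont : Continuous G := by rw [hG]; fun_prop
  -- step 1 : |Dm| ≤ (1/π) ∫ G
  have step1 : |Dm m (heatKernelDeriv ℓ t) n| ≤ (1/π) * ∫ θ in (0:ℝ)..π, G θ := by
    rw [Dm_heat_eq, abs_mul, abs_of_pos (by positivity : (0:ℝ) < 1/π)]
    apply mul_le_mul_of_nonneg_left _ (by positivity : (0:ℝ) ≤ 1/π)
    calc |∫ θ in (0:ℝ)..π, (-2*(1-Real.cos θ))^ℓ * Real.exp (-2*t*(1-Real.cos θ)) *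
            Dm m (fun k : ℤ => Real.cos ((k:ℝ) * θ)) n|
        ≤ ∫ θ in (0:ℝ)..π, |(-2*(1-Real.cos θ))^ℓ * Real.exp (-2*t*(1-Real.cos θ)) *
            Dm m (fun k : ℤ => Real.cos ((k:ℝ) * θ)) n| := by
          apply intervalIntegral.abs_integral_le_integral_abs Real.pi_pos.le
      _ ≤ ∫ θ in (0:ℝ)..π, G θ := by
          apply intervalIntegral.integral_mono_on Real.pi_pos.le
          · apply Continuous.intervalIntegrable
            apply Continuous.abs
            exact ((by fun_prop : Continuous fun θ : ℝ =>
              (-2*(1-Real.cos θ))^ℓ * Real.exp (-2*t*(1-Real.cos θ)))).mul (contDmcos m n)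
          · exact hGcont.intervalIntegrable _ _
          · intro θ hθ
            rw [abs_mul, abs_mul, hG]
            have h1 : |(-2*(1-Real.cos θ))^ℓ| = (2*(1-Real.cos θ))^ℓ := by
              rw [abs_pow, abs_of_nonpos (by nlinarith [Real.cos_le_one θ])]
              congr 1
              ring
            have h2 : |Real.exp (-2*t*(1-Real.cos θ))| = Real.exp (-2*t*(1-Real.cos θ)) :=
              abs_of_pos (Real.exp_pos _)
            rw [h1, h2]
            apply mul_le_mul_of_nonneg_left (Dm_cos_bound m n θ hθ.1)
              (mul_nonneg (pow_nonneg (by nlinarith [Real.cos_le_one θ]) ℓ)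
                (Real.exp_pos _).le)
  -- E1 : trivial bound
  have E1 : (∫ θ in (0:ℝ)..π, G θ) ≤ 4^ℓ * π^m * π := by
    calc (∫ θ in (0:ℝ)..π, G θ) ≤ ∫ _ in (0:ℝ)..π, (4:ℝ)^ℓ * π^m := by
          apply intervalIntegral.integral_mono_on Real.pi_pos.le
            (hGcont.intervalIntegrable _ _) (intervalIntegrable_const)
          intro θ hθ
          rw [hG]
          have hcos := Real.cos_le_one θ
          have hcos2 := Real.neg_one_le_cos θ
          have b1 : (2*(1-Real.cos θ))^ℓ ≤ 4^ℓ :=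
            pow_le_pow_left₀ (by nlinarith) (by nlinarith) ℓ
          have b2 : Real.exp (-2*t*(1-Real.cos θ)) ≤ 1 :=
            Real.exp_le_one_iff.mpr (by nlinarith)
          have b3 : θ^m ≤ π^m := pow_le_pow_left₀ hθ.1 hθ.2 m
          have g0 : (0:ℝ) ≤ (2*(1-Real.cos θ))^ℓ :=
            pow_nonneg (by nlinarith [Real.cos_le_one θ]) ℓ
          calc (2*(1-Real.cos θ))^ℓ * Real.exp (-2*t*(1-Real.cos θ)) * θ^m
              ≤ (2*(1-Real.cos θ))^ℓ * 1 * θ^m := by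
                apply mul_le_mul_of_nonneg_right _ (pow_nonneg hθ.1 m)
                apply mul_le_mul_of_nonneg_left b2 g0
            _ = (2*(1-Real.cos θ))^ℓ * θ^m := by ring
            _ ≤ 4^ℓ * π^m := by
                apply mul_le_mul b1 b3 (pow_nonneg hθ.1 m) (by positivity)
    _ = 4^ℓ * π^m * π := by
          rw [intervalIntegral.integral_const, smul_eq_mul]
          ring
  -- E2 : decay bound
  have E2 : (∫ θ in (0:ℝ)..π, G θ)
      ≤ (2^ℓ * (Nat.factorial ℓ) * (t^ℓ)⁻¹) * (CI * (c⁻¹)^(m+1)) := by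
    have hK0 : (0:ℝ) ≤ 2^ℓ * (Nat.factorial ℓ) * (t^ℓ)⁻¹ := by positivity
    calc (∫ θ in (0:ℝ)..π, G θ)
        ≤ ∫ θ in (0:ℝ)..π, (2^ℓ * (Nat.factorial ℓ) * (t^ℓ)⁻¹) *
            (θ^m * Real.exp (-((c*θ)^2))) := by
          apply intervalIntegral.integral_mono_on Real.pi_pos.le
            (hGcont.intervalIntegrable _ _)
            ((by fun_prop : Continuous fun θ : ℝ => (2^ℓ * (Nat.factorial ℓ) * (t^ℓ)⁻¹) *
              (θ^m * Real.exp (-((c*θ)^2)))).intervalIntegrable _ _)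
          intro θ hθ
          have hx : (0:ℝ) ≤ 1 - Real.cos θ := by nlinarith [Real.cos_le_one θ]
          have htl : (0:ℝ) < t^ℓ := pow_pos ht ℓ
          have key1 : (2*(1-Real.cos θ))^ℓ * Real.exp (-(t*(1-Real.cos θ)))
              ≤ 2^ℓ * (Nat.factorial ℓ) * (t^ℓ)⁻¹ := by
            have h1 : (t*(1-Real.cos θ))^ℓ / (Nat.factorial ℓ) ≤ Real.exp (t*(1-Real.cos θ)) :=
              Real.pow_div_factorial_le_exp (x := t*(1-Real.cos θ)) (by positivity) ℓ
            have h2 : t^ℓ * (1-Real.cos θ)^ℓ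
                ≤ (Nat.factorial ℓ) * Real.exp (t*(1-Real.cos θ)) := by
              rw [div_le_iff₀ (by positivity : (0:ℝ) < (Nat.factorial ℓ))] at h1
              calc t^ℓ * (1-Real.cos θ)^ℓ = (t*(1-Real.cos θ))^ℓ := by rw [mul_pow]
                _ ≤ Real.exp (t*(1-Real.cos θ)) * (Nat.factorial ℓ) := h1
                _ = (Nat.factorial ℓ) * Real.exp (t*(1-Real.cos θ)) := by ring
            have hE := Real.exp_pos (t*(1-Real.cos θ))
            have h3 : (1-Real.cos θ)^ℓ
                ≤ (Nat.factorial ℓ) * Real.exp (t*(1-Real.cos θ)) * (t^ℓ)⁻¹ := by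
              have h4 := mul_le_mul_of_nonneg_right h2 (inv_nonneg.mpr htl.le)
              calc (1-Real.cos θ)^ℓ = t^ℓ * (1-Real.cos θ)^ℓ * (t^ℓ)⁻¹ := by field_simp
                _ ≤ (Nat.factorial ℓ) * Real.exp (t*(1-Real.cos θ)) * (t^ℓ)⁻¹ := h4
            rw [Real.exp_neg]
            rw [show (2*(1-Real.cos θ))^ℓ = 2^ℓ * (1-Real.cos θ)^ℓ from by rw [mul_pow]]
            calc 2^ℓ * (1-Real.cos θ)^ℓ * (Real.exp (t*(1-Real.cos θ)))⁻¹
                ≤ 2^ℓ * ((Nat.factorial ℓ) * Real.exp (t*(1-Real.cos θ)) * (t^ℓ)⁻¹) *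
                  (Real.exp (t*(1-Real.cos θ)))⁻¹ := by
                  apply mul_le_mul_of_nonneg_right _ (by positivity)
                  apply mul_le_mul_of_nonneg_left h3 (by positivity)
              _ = 2^ℓ * (Nat.factorial ℓ) * (t^ℓ)⁻¹ := by
                  field_simp
          have key2 : Real.exp (-(t*(1-Real.cos θ))) ≤ Real.exp (-((c*θ)^2)) := by
            apply Real.exp_le_exp.mpr
            have hcb : Real.cos θ ≤ 1 - 2/π^2*θ^2 :=
              Real.cos_le_one_sub_mul_cos_sq (by rw [abs_of_nonneg hθ.1]; exact hθ.2)
            have hcsq : c^2 = 2*t/π^2 := by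
              rw [hc, div_pow, Real.sq_sqrt (by linarith : (0:ℝ) ≤ 2*t)]
            have hce : (c*θ)^2 = 2*t/π^2 * θ^2 := by
              rw [show (c*θ)^2 = c^2*θ^2 from by ring, hcsq]
            rw [hce]
            have hmul := mul_le_mul_of_nonneg_left
              (by linarith : 2/π^2*θ^2 ≤ 1 - Real.cos θ) ht.le
            have hre : 2*t/π^2*θ^2 = t*(2/π^2*θ^2) := by ring
            linarith
          have hGsplit : G θ = ((2*(1-Real.cos θ))^ℓ * Real.exp (-(t*(1-Real.cos θ)))) *
              Real.exp (-(t*(1-Real.cos θ))) * θ^m := by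
            simp only [hG]
            rw [show -2*t*(1-Real.cos θ) = -(t*(1-Real.cos θ)) + -(t*(1-Real.cos θ)) from by ring,
              Real.exp_add]
            ring
          rw [hGsplit]
          calc ((2*(1-Real.cos θ))^ℓ * Real.exp (-(t*(1-Real.cos θ)))) *
              Real.exp (-(t*(1-Real.cos θ))) * θ^m
              ≤ (2^ℓ * (Nat.factorial ℓ) * (t^ℓ)⁻¹) * Real.exp (-((c*θ)^2)) * θ^m := by
                apply mul_le_mul_of_nonneg_right _ (pow_nonneg hθ.1 m)
                apply mul_le_mul key1 key2 (Real.exp_pos _).le hK0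
            _ = (2^ℓ * (Nat.factorial ℓ) * (t^ℓ)⁻¹) * (θ^m * Real.exp (-((c*θ)^2))) := by ring
      _ = (2^ℓ * (Nat.factorial ℓ) * (t^ℓ)⁻¹) * ∫ θ in (0:ℝ)..π, θ^m * Real.exp (-((c*θ)^2)) := by
          rw [intervalIntegral.integral_const_mul]
      _ ≤ (2^ℓ * (Nat.factorial ℓ) * (t^ℓ)⁻¹) * (CI * (c⁻¹)^(m+1)) := by
          exact mul_le_mul_of_nonneg_left (hmom c hc0) hK0
  -- combine
  have hst : (0:ℝ) < Real.sqrt t := Real.sqrt_pos.mpr ht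
  have hsqeq : (Real.sqrt t)^(m+1) = t ^ (((m:ℝ)+1)/2) := by
    rw [Real.sqrt_eq_rpow, ← Real.rpow_natCast (t ^ ((1:ℝ)/2)) (m+1), ← Real.rpow_mul ht.le]
    congr 1
    push_cast
    ring
  have hYeq : t ^ (-(ℓ:ℝ) - ((m:ℝ)+1)/2) = (t^ℓ)⁻¹ * ((Real.sqrt t)⁻¹)^(m+1) := by
    rw [show -(ℓ:ℝ) - ((m:ℝ)+1)/2 = (-(ℓ:ℝ)) + (-((((m:ℝ)+1))/2)) from by ring,
      Real.rpow_add ht, Real.rpow_neg ht.le, Real.rpow_neg ht.le, Real.rpow_natCast,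
      inv_pow, hsqeq]
  have hfin1 : |Dm m (heatKernelDeriv ℓ t) n| ≤ A := by
    have h5 := mul_le_mul_of_nonneg_left E1 (by positivity : (0:ℝ) ≤ 1/π)
    calc |Dm m (heatKernelDeriv ℓ t) n| ≤ (1/π) * ∫ θ in (0:ℝ)..π, G θ := step1
      _ ≤ (1/π) * (4^ℓ * π^m * π) := h5
      _ ≤ A := by rw [hA]; linarith
  have hfin2 : |Dm m (heatKernelDeriv ℓ t) n|
      ≤ B * ((t^ℓ)⁻¹ * ((Real.sqrt t)⁻¹)^(m+1)) := by
    have hcpow : (c⁻¹)^(m+1) ≤ π^(m+1) * ((Real.sqrt t)⁻¹)^(m+1) := by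
      have hci : c⁻¹ ≤ π * (Real.sqrt t)⁻¹ := by
        rw [hc, inv_div]
        have h6 : Real.sqrt t ≤ Real.sqrt (2*t) := Real.sqrt_le_sqrt (by linarith)
        rw [div_le_iff₀ (Real.sqrt_pos.mpr (by linarith : (0:ℝ) < 2*t))]
        rw [mul_assoc]
        have h8 : (1:ℝ) ≤ (Real.sqrt t)⁻¹ * Real.sqrt (2*t) := by
          have h9 := mul_le_mul_of_nonneg_left h6 (inv_nonneg.mpr hst.le)
          rwa [inv_mul_cancel₀ hst.ne'] at h9
        nlinarith [hpi, h8]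
      calc (c⁻¹)^(m+1) ≤ (π * (Real.sqrt t)⁻¹)^(m+1) :=
            pow_le_pow_left₀ (by positivity) hci (m+1)
        _ = π^(m+1) * ((Real.sqrt t)⁻¹)^(m+1) := by rw [mul_pow]
    have h7 := mul_le_mul_of_nonneg_left E2 (by positivity : (0:ℝ) ≤ 1/π)
    calc |Dm m (heatKernelDeriv ℓ t) n| ≤ (1/π) * ∫ θ in (0:ℝ)..π, G θ := step1
      _ ≤ (1/π) * ((2^ℓ * (Nat.factorial ℓ) * (t^ℓ)⁻¹) * (CI * (c⁻¹)^(m+1))) := h7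
      _ ≤ (1/π) * ((2^ℓ * (Nat.factorial ℓ) * (t^ℓ)⁻¹) *
          (CI * (π^(m+1) * ((Real.sqrt t)⁻¹)^(m+1)))) := by
          gcongr
      _ = ((1/π) * (2^ℓ * (Nat.factorial ℓ) * (CI * π^(m+1)))) *
          ((t^ℓ)⁻¹ * ((Real.sqrt t)⁻¹)^(m+1)) := by ring
      _ ≤ B * ((t^ℓ)⁻¹ * ((Real.sqrt t)⁻¹)^(m+1)) := by
          apply mul_le_mul_of_nonneg_right _ (by positivity)
          rw [hB]
          linarith
  have hY0 : (0:ℝ) < t ^ (-(ℓ:ℝ) - ((m:ℝ)+1)/2) := Real.rpow_pos_of_pos ht _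
  rw [← hYeq] at hfin2
  exact minc hfin1 hfin2 hA0.le hB0.le hY0

lemma L1 {t e' e : ℝ} (ht : 0 < t) (h1 : e' ≤ e) (h2 : e ≤ 0) :
    min 1 (t ^ e') ≤ min 1 (t ^ e) := by
  rcases le_total t 1 with h | h
  · have hge : 1 ≤ t ^ e := Real.one_le_rpow_of_pos_of_le_one_of_nonpos ht h h2
    calc min 1 (t ^ e') ≤ 1 := min_le_left _ _
    _ = min 1 (t ^ e) := (min_eq_left hge).symm
  · exact min_le_min le_rfl (Real.rpow_le_rpow_of_exponent_le h h1)

lemma L2 {t e : ℝ} (ht : 0 < t) (h2 : e ≤ 0) :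
    t * min 1 (t ^ (e - 1)) ≤ min 1 (t ^ e) := by
  rcases le_total t 1 with h | h
  · have hge : 1 ≤ t ^ e := Real.one_le_rpow_of_pos_of_le_one_of_nonpos ht h h2
    rw [min_eq_left hge]
    calc t * min 1 (t^(e-1)) ≤ t * 1 :=
        mul_le_mul_of_nonneg_left (min_le_left _ _) ht.le
    _ = t := mul_one t
    _ ≤ 1 := h
  · have hle : t ^ (e-1) ≤ 1 := Real.rpow_le_one_of_one_le_of_nonpos h (by linarith)
    have hle2 : t ^ e ≤ 1 := Real.rpow_le_one_of_one_le_of_nonpos h h2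
    rw [min_eq_right hle, min_eq_right hle2]
    rw [show e = 1 + (e-1) from by ring, Real.rpow_add ht, Real.rpow_one]
    rw [show 1 + (e-1) - 1 = e - 1 from by ring]

lemma tri (x y : ℝ) : |x - y| ≤ |x| + |y| := by
  rw [sub_eq_add_neg]
  exact (abs_add_le x (-y)).trans_eq (by rw [abs_neg])

lemma main_claim : ∀ (j ℓ m : ℕ) (a : ℤ), j ≤ 2*ℓ + m + 1 → ∃ C, 0 < C ∧
    ∀ (t : ℝ), 0 < t → ∀ n : ℤ,
      |(n:ℝ)|^j * |Dm m (heatKernelDeriv ℓ t) (n+a)|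
        ≤ C * min 1 (t ^ ((j:ℝ)/2 - (ℓ:ℝ) - ((m:ℝ)+1)/2)) := by
  intro j
  induction j with
  | zero =>
    intro ℓ m a _
    obtain ⟨C, hC0, hC⟩ := base_bound ℓ m
    refine ⟨C, hC0, ?_⟩
    intro t ht n
    have he : ((0:ℕ):ℝ)/2 - (ℓ:ℝ) - ((m:ℝ)+1)/2 = -(ℓ:ℝ) - ((m:ℝ)+1)/2 := by
      push_cast
      ring
    rw [he, pow_zero, one_mul]
    exact hC t ht (n+a)
  | succ j ih =>
    intro ℓ m a hcond
    obtain ⟨C1, hC10, hC1⟩ := ih ℓ (m+1) a (by omega)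
    obtain ⟨C2, hC20, hC2⟩ := ih ℓ (m+1) (a-1) (by omega)
    obtain ⟨C3, hC30, hC3⟩ := ih (ℓ-1) (m+1) a (by omega)
    obtain ⟨C4, hC40, hC4⟩ := ih (ℓ-1) (m+1) (a-1) (by omega)
    obtain ⟨C5, hC50, hC5⟩ := ih ℓ m a (by omega)
    obtain ⟨C6, hC60, hC6⟩ := ih ℓ (m-1) (a+1) (by omega)
    refine ⟨(ℓ:ℝ)*(C3+C4) + (C1+C2) + |(a:ℝ)| * C5 + (m:ℝ)*C6 + 1, by positivity, ?_⟩
    intro t ht n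
    set E : ℝ := ((j:ℝ)+1)/2 - (ℓ:ℝ) - ((m:ℝ)+1)/2 with hE
    have hgoalE : ((j+1:ℕ):ℝ)/2 - (ℓ:ℝ) - ((m:ℝ)+1)/2 = E := by
      rw [hE]; push_cast; ring
    have hE0 : E ≤ 0 := by
      have : ((j:ℝ)+1) ≤ 2*(ℓ:ℝ) + (m:ℝ) + 1 := by exact_mod_cast hcond
      rw [hE]; linarith
    have hl1 : (ℓ:ℝ) - 1 ≤ ((ℓ-1:ℕ):ℝ) := by
      rcases Nat.eq_zero_or_pos ℓ with h | h
      · subst h; norm_num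
      · rw [Nat.cast_sub h]; norm_num
    have hm1 : (m:ℝ) - 1 ≤ ((m-1:ℕ):ℝ) := by
      rcases Nat.eq_zero_or_pos m with h | h
      · subst h; norm_num
      · rw [Nat.cast_sub h]; norm_num
    set M : ℝ := min 1 (t ^ E) with hM
    have hM0 : (0:ℝ) ≤ M := le_min zero_le_one (Real.rpow_pos_of_pos ht E).le
    set X : ℝ := min 1 (t ^ (E - 1)) with hX
    -- exponent identifications
    have he1 : ((j:ℝ))/2 - (ℓ:ℝ) - (((m+1:ℕ):ℝ)+1)/2 = E - 1 := by
      rw [hE]; push_cast; ring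
    have he3 : ((j:ℝ))/2 - ((ℓ-1:ℕ):ℝ) - (((m+1:ℕ):ℝ)+1)/2 ≤ E := by
      rw [hE]; push_cast; linarith
    have he5 : ((j:ℝ))/2 - (ℓ:ℝ) - ((m:ℝ)+1)/2 ≤ E := by
      rw [hE]; linarith
    have he6 : ((j:ℝ))/2 - (ℓ:ℝ) - (((m-1:ℕ):ℝ)+1)/2 ≤ E := by
      rw [hE]; push_cast; linarith
    -- six bounds
    have b1 : |(n:ℝ)|^j * |Dm (m+1) (heatKernelDeriv ℓ t) (n+a)| ≤ C1 * X := by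
      have := hC1 t ht n
      rwa [he1] at this
    have b2 : |(n:ℝ)|^j * |Dm (m+1) (heatKernelDeriv ℓ t) (n+(a-1))| ≤ C2 * X := by
      have := hC2 t ht n
      rwa [he1] at this
    have b3 : |(n:ℝ)|^j * |Dm (m+1) (heatKernelDeriv (ℓ-1) t) (n+a)| ≤ C3 * M := by
      have h := hC3 t ht n
      calc |(n:ℝ)|^j * |Dm (m+1) (heatKernelDeriv (ℓ-1) t) (n+a)|
          ≤ C3 * min 1 (t ^ ((j:ℝ)/2 - ((ℓ-1:ℕ):ℝ) - (((m+1:ℕ):ℝ)+1)/2)) := h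
        _ ≤ C3 * M := mul_le_mul_of_nonneg_left (L1 ht he3 hE0) hC30.le
    have b4 : |(n:ℝ)|^j * |Dm (m+1) (heatKernelDeriv (ℓ-1) t) (n+(a-1))| ≤ C4 * M := by
      have h := hC4 t ht n
      calc |(n:ℝ)|^j * |Dm (m+1) (heatKernelDeriv (ℓ-1) t) (n+(a-1))|
          ≤ C4 * min 1 (t ^ ((j:ℝ)/2 - ((ℓ-1:ℕ):ℝ) - (((m+1:ℕ):ℝ)+1)/2)) := h
        _ ≤ C4 * M := mul_le_mul_of_nonneg_left (L1 ht he3 hE0) hC40.le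
    have b5 : |(n:ℝ)|^j * |Dm m (heatKernelDeriv ℓ t) (n+a)| ≤ C5 * M := by
      have h := hC5 t ht n
      calc |(n:ℝ)|^j * |Dm m (heatKernelDeriv ℓ t) (n+a)|
          ≤ C5 * min 1 (t ^ ((j:ℝ)/2 - (ℓ:ℝ) - ((m:ℝ)+1)/2)) := h
        _ ≤ C5 * M := mul_le_mul_of_nonneg_left (L1 ht he5 hE0) hC50.le
    have b6 : |(n:ℝ)|^j * |Dm (m-1) (heatKernelDeriv ℓ t) (n+(a+1))| ≤ C6 * M := by
      have h := hC6 t ht n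
      calc |(n:ℝ)|^j * |Dm (m-1) (heatKernelDeriv ℓ t) (n+(a+1))|
          ≤ C6 * min 1 (t ^ ((j:ℝ)/2 - (ℓ:ℝ) - (((m-1:ℕ):ℝ)+1)/2)) := h
        _ ≤ C6 * M := mul_le_mul_of_nonneg_left (L1 ht he6 hE0) hC60.le
    have bt : t * X ≤ M := L2 ht hE0
    -- the identity
    have hid := Dm_identity (heatKernelDeriv (ℓ-1) t) (heatKernelDeriv ℓ t) (ℓ:ℝ) t
      (fun q => keyK ℓ t q) m (n+a)
    have ha1 : n + a - 1 = n + (a-1) := by ring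
    have ha2 : n + a + 1 = n + (a+1) := by ring
    rw [ha1, ha2] at hid
    have h0 : (n:ℝ) * Dm m (heatKernelDeriv ℓ t) (n+a)
        = (-(ℓ:ℝ) * (Dm (m+1) (heatKernelDeriv (ℓ-1) t) (n+(a-1))
            + Dm (m+1) (heatKernelDeriv (ℓ-1) t) (n+a))
          - t * (Dm (m+1) (heatKernelDeriv ℓ t) (n+(a-1))
            + Dm (m+1) (heatKernelDeriv ℓ t) (n+a))
          - (m:ℝ) * Dm (m-1) (heatKernelDeriv ℓ t) (n+(a+1)))
          - (a:ℝ) * Dm m (heatKernelDeriv ℓ t) (n+a) := by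
      rw [← hid]
      push_cast
      ring
    have hnG : |(n:ℝ) * Dm m (heatKernelDeriv ℓ t) (n+a)|
        ≤ (ℓ:ℝ) * (|Dm (m+1) (heatKernelDeriv (ℓ-1) t) (n+(a-1))|
            + |Dm (m+1) (heatKernelDeriv (ℓ-1) t) (n+a)|)
          + t * (|Dm (m+1) (heatKernelDeriv ℓ t) (n+(a-1))|
            + |Dm (m+1) (heatKernelDeriv ℓ t) (n+a)|)
          + |(a:ℝ)| * |Dm m (heatKernelDeriv ℓ t) (n+a)|
          + (m:ℝ) * |Dm (m-1) (heatKernelDeriv ℓ t) (n+(a+1))| := by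
      rw [h0]
      have t1 := tri (-(ℓ:ℝ) * (Dm (m+1) (heatKernelDeriv (ℓ-1) t) (n+(a-1))
            + Dm (m+1) (heatKernelDeriv (ℓ-1) t) (n+a))
          - t * (Dm (m+1) (heatKernelDeriv ℓ t) (n+(a-1))
            + Dm (m+1) (heatKernelDeriv ℓ t) (n+a))
          - (m:ℝ) * Dm (m-1) (heatKernelDeriv ℓ t) (n+(a+1)))
          ((a:ℝ) * Dm m (heatKernelDeriv ℓ t) (n+a))
      have t2 := tri (-(ℓ:ℝ) * (Dm (m+1) (heatKernelDeriv (ℓ-1) t) (n+(a-1))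
            + Dm (m+1) (heatKernelDeriv (ℓ-1) t) (n+a))
          - t * (Dm (m+1) (heatKernelDeriv ℓ t) (n+(a-1))
            + Dm (m+1) (heatKernelDeriv ℓ t) (n+a)))
          ((m:ℝ) * Dm (m-1) (heatKernelDeriv ℓ t) (n+(a+1)))
      have t3 := tri (-(ℓ:ℝ) * (Dm (m+1) (heatKernelDeriv (ℓ-1) t) (n+(a-1))
            + Dm (m+1) (heatKernelDeriv (ℓ-1) t) (n+a)))
          (t * (Dm (m+1) (heatKernelDeriv ℓ t) (n+(a-1))
            + Dm (m+1) (heatKernelDeriv ℓ t) (n+a)))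
      have a1 : |(-(ℓ:ℝ)) * (Dm (m+1) (heatKernelDeriv (ℓ-1) t) (n+(a-1))
            + Dm (m+1) (heatKernelDeriv (ℓ-1) t) (n+a))|
          ≤ (ℓ:ℝ) * (|Dm (m+1) (heatKernelDeriv (ℓ-1) t) (n+(a-1))|
            + |Dm (m+1) (heatKernelDeriv (ℓ-1) t) (n+a)|) := by
        rw [abs_mul, abs_neg, Nat.abs_cast]
        exact mul_le_mul_of_nonneg_left (abs_add_le _ _) (Nat.cast_nonneg ℓ)
      have a2 : |t * (Dm (m+1) (heatKernelDeriv ℓ t) (n+(a-1))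
            + Dm (m+1) (heatKernelDeriv ℓ t) (n+a))|
          ≤ t * (|Dm (m+1) (heatKernelDeriv ℓ t) (n+(a-1))|
            + |Dm (m+1) (heatKernelDeriv ℓ t) (n+a)|) := by
        rw [abs_mul, abs_of_pos ht]
        exact mul_le_mul_of_nonneg_left (abs_add_le _ _) ht.le
      have a3 : |(a:ℝ) * Dm m (heatKernelDeriv ℓ t) (n+a)|
          = |(a:ℝ)| * |Dm m (heatKernelDeriv ℓ t) (n+a)| := abs_mul _ _
      have a4 : |(m:ℝ) * Dm (m-1) (heatKernelDeriv ℓ t) (n+(a+1))|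
          = (m:ℝ) * |Dm (m-1) (heatKernelDeriv ℓ t) (n+(a+1))| := by
        rw [abs_mul, Nat.abs_cast]
      linarith [t1, t2, t3, a1, a2, a3.le, a4.le]
    -- put everything together
    have hnj : (0:ℝ) ≤ |(n:ℝ)|^j := by positivity
    calc |(n:ℝ)|^(j+1) * |Dm m (heatKernelDeriv ℓ t) (n+a)|
        = |(n:ℝ)|^j * |(n:ℝ) * Dm m (heatKernelDeriv ℓ t) (n+a)| := by
          rw [abs_mul, pow_succ]
          ring
      _ ≤ |(n:ℝ)|^j * ((ℓ:ℝ) * (|Dm (m+1) (heatKernelDeriv (ℓ-1) t) (n+(a-1))|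
            + |Dm (m+1) (heatKernelDeriv (ℓ-1) t) (n+a)|)
          + t * (|Dm (m+1) (heatKernelDeriv ℓ t) (n+(a-1))|
            + |Dm (m+1) (heatKernelDeriv ℓ t) (n+a)|)
          + |(a:ℝ)| * |Dm m (heatKernelDeriv ℓ t) (n+a)|
          + (m:ℝ) * |Dm (m-1) (heatKernelDeriv ℓ t) (n+(a+1))|) :=
          mul_le_mul_of_nonneg_left hnG hnj
      _ = (ℓ:ℝ) * (|(n:ℝ)|^j * |Dm (m+1) (heatKernelDeriv (ℓ-1) t) (n+(a-1))|
            + |(n:ℝ)|^j * |Dm (m+1) (heatKernelDeriv (ℓ-1) t) (n+a)|)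
          + t * (|(n:ℝ)|^j * |Dm (m+1) (heatKernelDeriv ℓ t) (n+(a-1))|
            + |(n:ℝ)|^j * |Dm (m+1) (heatKernelDeriv ℓ t) (n+a)|)
          + |(a:ℝ)| * (|(n:ℝ)|^j * |Dm m (heatKernelDeriv ℓ t) (n+a)|)
          + (m:ℝ) * (|(n:ℝ)|^j * |Dm (m-1) (heatKernelDeriv ℓ t) (n+(a+1))|) := by
          ring
      _ ≤ (ℓ:ℝ) * (C4 * M + C3 * M) + t * (C2 * X + C1 * X)
          + |(a:ℝ)| * (C5 * M) + (m:ℝ) * (C6 * M) := by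
          have s1 := add_le_add b4 b3
          have s2 := add_le_add b2 b1
          have g1 := mul_le_mul_of_nonneg_left s1 (Nat.cast_nonneg ℓ : (0:ℝ) ≤ ℓ)
          have g2 := mul_le_mul_of_nonneg_left s2 ht.le
          have g3 := mul_le_mul_of_nonneg_left b5 (abs_nonneg (a:ℝ))
          have g4 := mul_le_mul_of_nonneg_left b6 (Nat.cast_nonneg m : (0:ℝ) ≤ m)
          linarith
      _ = (ℓ:ℝ) * (C3 + C4) * M + (C1 + C2) * (t * X)
          + (|(a:ℝ)| * C5) * M + ((m:ℝ) * C6) * M := by ring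
      _ ≤ (ℓ:ℝ) * (C3 + C4) * M + (C1 + C2) * M
          + (|(a:ℝ)| * C5) * M + ((m:ℝ) * C6) * M := by
          have := mul_le_mul_of_nonneg_left bt (by positivity : (0:ℝ) ≤ C1 + C2)
          linarith
      _ = ((ℓ:ℝ)*(C3+C4) + (C1+C2) + |(a:ℝ)| * C5 + (m:ℝ)*C6) * M := by ring
      _ ≤ ((ℓ:ℝ)*(C3+C4) + (C1+C2) + |(a:ℝ)| * C5 + (m:ℝ)*C6 + 1) * M :=
          mul_le_mul_of_nonneg_right (by linarith) hM0
      _ = ((ℓ:ℝ)*(C3+C4) + (C1+C2) + |(a:ℝ)| * C5 + (m:ℝ)*C6 + 1)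
          * min 1 (t ^ (((j+1:ℕ):ℝ)/2 - (ℓ:ℝ) - ((m:ℝ)+1)/2)) := by
          rw [hgoalE]

lemma max_pow_le (u : ℝ) (hu : 0 ≤ u) (ℓ : ℕ) : (max 1 u)^ℓ ≤ 1 + u^ℓ := by
  rcases le_total u 1 with h | h
  · rw [max_eq_left h]
    rw [one_pow]
    nlinarith [pow_nonneg hu ℓ]
  · rw [max_eq_right h]
    nlinarith [pow_nonneg hu ℓ]


/-- For every `ℓ ∈ ℕ` there is `C = C(ℓ) > 0` such that
`|D ∂_t^ℓ h_t(n)| + |D* ∂_t^ℓ h_t(n)| ≤ C t^{-(ℓ+1)} (1 + |n|/√t)^{-ℓ}`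
for all `n ∈ ℤ` and `t > 0`, where `D g(n) = g(n+1) - g(n)` and
`D* g(n) = g(n) - g(n-1)` act in the variable `n`. -/
theorem stmt7 (ℓ : ℕ) :
    ∃ C : ℝ, 0 < C ∧ ∀ (n : ℤ) (t : ℝ), 0 < t →
      |heatKernelDeriv ℓ t (n + 1) - heatKernelDeriv ℓ t n| +
        |heatKernelDeriv ℓ t n - heatKernelDeriv ℓ t (n - 1)| ≤
          C * t ^ (-((ℓ : ℝ) + 1)) * (1 + |(n : ℝ)| / Real.sqrt t) ^ (-(ℓ : ℝ)) := by
  obtain ⟨Ca, hCa0, hCa⟩ := main_claim ℓ ℓ 1 0 (by omega)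
  obtain ⟨Cb, hCb0, hCb⟩ := main_claim ℓ ℓ 1 (-1) (by omega)
  obtain ⟨C0a, hC0a0, hC0a⟩ := main_claim 0 ℓ 1 0 (by omega)
  obtain ⟨C0b, hC0b0, hC0b⟩ := main_claim 0 ℓ 1 (-1) (by omega)
  refine ⟨2^ℓ * (C0a + C0b + Ca + Cb) + 1, by positivity, ?_⟩
  intro n t ht
  have hst : 0 < Real.sqrt t := Real.sqrt_pos.mpr ht
  set u : ℝ := |(n:ℝ)| / Real.sqrt t with hu
  have hu0 : 0 ≤ u := by positivity
  have h1u : (0:ℝ) < 1 + u := by linarith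
  set T : ℝ := t ^ (-((ℓ:ℝ) + 1)) with hT
  have hT0 : 0 < T := Real.rpow_pos_of_pos ht _
  have hD : heatKernelDeriv ℓ t (n+1) - heatKernelDeriv ℓ t n
      = Dm 1 (heatKernelDeriv ℓ t) (n+0) := by
    simp [Dm]
  have hDs : heatKernelDeriv ℓ t n - heatKernelDeriv ℓ t (n-1)
      = Dm 1 (heatKernelDeriv ℓ t) (n+(-1)) := by
    simp only [Dm]
    rw [show n + (-1:ℤ) + 1 = n from by ring, show n + (-1:ℤ) = n - 1 from by ring]
  set F1 : ℝ := |Dm 1 (heatKernelDeriv ℓ t) (n+0)| with hF1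
  set F2 : ℝ := |Dm 1 (heatKernelDeriv ℓ t) (n+(-1))| with hF2
  have hF10 : 0 ≤ F1 := abs_nonneg _
  have hF20 : 0 ≤ F2 := abs_nonneg _
  -- zero-weight bounds
  have heq0 : ((0:ℕ):ℝ)/2 - ((ℓ:ℕ):ℝ) - (((1:ℕ):ℝ)+1)/2 = -((ℓ:ℝ)+1) := by
    push_cast; ring
  have bA : F1 + F2 ≤ (C0a + C0b) * T := by
    have h1 := hC0a t ht n
    have h2 := hC0b t ht n
    rw [heq0, pow_zero, one_mul] at h1 h2
    have m1 : C0a * min 1 (t ^ (-((ℓ:ℝ)+1))) ≤ C0a * T :=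
      mul_le_mul_of_nonneg_left (min_le_right _ _) hC0a0.le
    have m2 : C0b * min 1 (t ^ (-((ℓ:ℝ)+1))) ≤ C0b * T :=
      mul_le_mul_of_nonneg_left (min_le_right _ _) hC0b0.le
    rw [hF1, hF2]
    calc |Dm 1 (heatKernelDeriv ℓ t) (n+0)| + |Dm 1 (heatKernelDeriv ℓ t) (n+(-1))|
        ≤ C0a * min 1 (t ^ (-((ℓ:ℝ)+1))) + C0b * min 1 (t ^ (-((ℓ:ℝ)+1))) := add_le_add h1 h2
      _ ≤ C0a * T + C0b * T := add_le_add m1 m2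
      _ = (C0a + C0b) * T := by ring
  -- weighted bounds
  have heqL : ((ℓ:ℕ):ℝ)/2 - ((ℓ:ℕ):ℝ) - (((1:ℕ):ℝ)+1)/2 = (ℓ:ℝ)/2 - (ℓ:ℝ) - 1 := by
    push_cast; ring
  have bB : |(n:ℝ)|^ℓ * (F1 + F2) ≤ (Ca + Cb) * t ^ ((ℓ:ℝ)/2 - (ℓ:ℝ) - 1) := by
    have h1 := hCa t ht n
    have h2 := hCb t ht n
    rw [heqL] at h1 h2
    have m1 : Ca * min 1 (t ^ ((ℓ:ℝ)/2 - (ℓ:ℝ) - 1)) ≤ Ca * t ^ ((ℓ:ℝ)/2 - (ℓ:ℝ) - 1) :=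
      mul_le_mul_of_nonneg_left (min_le_right _ _) hCa0.le
    have m2 : Cb * min 1 (t ^ ((ℓ:ℝ)/2 - (ℓ:ℝ) - 1)) ≤ Cb * t ^ ((ℓ:ℝ)/2 - (ℓ:ℝ) - 1) :=
      mul_le_mul_of_nonneg_left (min_le_right _ _) hCb0.le
    calc |(n:ℝ)|^ℓ * (F1 + F2) = |(n:ℝ)|^ℓ * F1 + |(n:ℝ)|^ℓ * F2 := by ring
      _ ≤ Ca * min 1 (t ^ ((ℓ:ℝ)/2 - (ℓ:ℝ) - 1)) + Cb * min 1 (t ^ ((ℓ:ℝ)/2 - (ℓ:ℝ) - 1)) :=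
          add_le_add h1 h2
      _ ≤ (Ca + Cb) * t ^ ((ℓ:ℝ)/2 - (ℓ:ℝ) - 1) := by linarith
  have hsq : (Real.sqrt t)^ℓ = t ^ ((ℓ:ℝ)/2) := by
    rw [Real.sqrt_eq_rpow, ← Real.rpow_natCast (t ^ ((1:ℝ)/2)) ℓ, ← Real.rpow_mul ht.le]
    congr 1
    ring
  have bC : u^ℓ * (F1 + F2) ≤ (Ca + Cb) * T := by
    have hupow : u^ℓ = |(n:ℝ)|^ℓ * ((Real.sqrt t)^ℓ)⁻¹ := by
      rw [hu, div_pow, div_eq_mul_inv]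
    have hstep := mul_le_mul_of_nonneg_right bB
      (inv_nonneg.mpr (pow_nonneg hst.le ℓ) : (0:ℝ) ≤ ((Real.sqrt t)^ℓ)⁻¹)
    have hrw : (Ca + Cb) * t ^ ((ℓ:ℝ)/2 - (ℓ:ℝ) - 1) * ((Real.sqrt t)^ℓ)⁻¹
        = (Ca + Cb) * T := by
      rw [hsq, ← Real.rpow_neg ht.le, mul_assoc, ← Real.rpow_add ht, hT]
      congr 2
      ring
    calc u^ℓ * (F1 + F2) = |(n:ℝ)|^ℓ * (F1 + F2) * ((Real.sqrt t)^ℓ)⁻¹ := by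
          rw [hupow]; ring
      _ ≤ (Ca + Cb) * t ^ ((ℓ:ℝ)/2 - (ℓ:ℝ) - 1) * ((Real.sqrt t)^ℓ)⁻¹ := hstep
      _ = (Ca + Cb) * T := hrw
  -- power comparison
  have hpow : (1+u)^ℓ ≤ 2^ℓ * (1 + u^ℓ) := by
    have h1 : (1+u) ≤ 2 * max 1 u := by
      have := le_max_left (1:ℝ) u
      have := le_max_right (1:ℝ) u
      linarith
    calc (1+u)^ℓ ≤ (2 * max 1 u)^ℓ := pow_le_pow_left₀ h1u.le h1 ℓ
      _ = 2^ℓ * (max 1 u)^ℓ := by rw [mul_pow]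
      _ ≤ 2^ℓ * (1 + u^ℓ) :=
          mul_le_mul_of_nonneg_left (max_pow_le u hu0 ℓ) (by positivity)
  -- main combination
  have H : (1+u)^ℓ * (F1 + F2) ≤ (2^ℓ * (C0a + C0b + Ca + Cb) + 1) * T := by
    calc (1+u)^ℓ * (F1 + F2) ≤ (2^ℓ * (1 + u^ℓ)) * (F1 + F2) :=
          mul_le_mul_of_nonneg_right hpow (by linarith)
      _ = 2^ℓ * ((F1 + F2) + u^ℓ * (F1 + F2)) := by ring
      _ ≤ 2^ℓ * ((C0a + C0b) * T + (Ca + Cb) * T) := by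
          have := add_le_add bA bC
          apply mul_le_mul_of_nonneg_left _ (by positivity : (0:ℝ) ≤ 2^ℓ)
          linarith
      _ = (2^ℓ * (C0a + C0b + Ca + Cb)) * T := by ring
      _ ≤ (2^ℓ * (C0a + C0b + Ca + Cb) + 1) * T :=
          mul_le_mul_of_nonneg_right (by linarith) hT0.le
  -- conclude
  rw [hD, hDs, ← hF1, ← hF2]
  have hPpos : (0:ℝ) < (1+u)^ℓ := pow_pos h1u ℓ
  rw [Real.rpow_neg h1u.le, Real.rpow_natCast, ← div_eq_mul_inv, le_div_iff₀ hPpos]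
  calc (F1 + F2) * (1+u)^ℓ = (1+u)^ℓ * (F1 + F2) := by ring
    _ ≤ (2^ℓ * (C0a + C0b + Ca + Cb) + 1) * T := H
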